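/- arXiv:0903.4815 — 6 statements merged into one kernel-verified Lean document; each statement's English description precedes it below -/
import Mathlib

section
/- Let Δ = Δ(P,Q,R) be the triangle spanned by P = (a,p), Q = (b,q) with b > a and q ≥ p, and R = (b,r) with r > q. Let ρ = √((b−a)² + (r−p)²) be the length of PR, let ψ = arctan((q−p)/(b−a)) and λ = arctan((r−p)/(b−a)). Let Γ be a convex curve of arc length ρ connecting P to a point N = (n,s), such that all tangent vectors along Γ (including one-sided half-tangents at the endpoints) have angles in [ψ, λ]. Then n ≥ b, with equality only if N = R; if N ≠ R then n > b and Γ intersects the vertical segment from Q to R at a point (b,m) with q ≤ m < r; moreover s ∈ [p + ((q−p)/(b−a))·(n−a), r]. -/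
/-!
If every tangent direction `α u` lies within angle `δ ≤ π` of a fixed direction `θ`, then
`cos (α u - θ) ≥ cos δ`, and integrating shows that the displacement after arc length `σ`,
projected on `(cos θ, sin θ)`, is at least `σ cos δ`. Since the directions lie in `[ψ, λ]`,
the chord `PR` has length `ρ` and direction `λ`, and the side `PQ` has direction `ψ`,
four choices of `θ` give the claim: `θ = 0` gives `n - a ≥ ρ cos λ = b - a`; `θ = -π/2`
gives `s - p ≤ ρ sin λ = r - p`; `θ = ψ + π/2` keeps the curve above the line `PQ`;
and the bisector `θ = λ/2` shows that if `n = b` then also `s ≥ r`. The crossing with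
`QR` comes from the intermediate value theorem applied to the abscissa.
-/

open Set intervalIntegral Real MeasureTheory

theorem IntervalIntegrable.continuous_comp_of_norm_le {E : Type*} [NormedAddCommGroup E]
    {f : ℝ → ℝ} {g : ℝ → E} {a b C : ℝ} (hf : IntervalIntegrable f volume a b)
    (hg : Continuous g) (hgC : ∀ x, ‖g x‖ ≤ C) :
    IntervalIntegrable (fun x => g (f x)) volume a b :=
  (intervalIntegrable_const (c := C)).mono_fun'
    (hg.comp_aestronglyMeasurable hf.def'.aestronglyMeasurable) (ae_of_all _ fun x => hgC (f x))

theorem MonotoneOn.intervalIntegrable_cos_comp_sub {α : ℝ → ℝ} {a b θ : ℝ}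
    (hα : MonotoneOn α (uIcc a b)) : IntervalIntegrable (fun x => cos (α x - θ)) volume a b :=
  hα.intervalIntegrable.continuous_comp_of_norm_le (continuous_cos.comp (continuous_sub_right θ))
    fun _ => (norm_eq_abs _).trans_le (abs_cos_le_one _)

theorem sqrt_sq_add_sq_mul_cos_arctan_div {x y : ℝ} (hx : 0 < x) :
    √(x ^ 2 + y ^ 2) * cos (arctan (y / x)) = x := by
  have : √(x ^ 2 + y ^ 2) = x * √(1 + (y / x) ^ 2) := by
    rw [← sqrt_sq hx.le, ← sqrt_mul (sq_nonneg x), sqrt_sq hx.le]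
    congr 1
    field_simp
  rw [cos_arctan, this]
  field_simp

theorem sqrt_sq_add_sq_mul_sin_arctan_div {x y : ℝ} (hx : 0 < x) :
    √(x ^ 2 + y ^ 2) * sin (arctan (y / x)) = y :=
  calc √(x ^ 2 + y ^ 2) * sin (arctan (y / x))
      = √(x ^ 2 + y ^ 2) * cos (arctan (y / x)) * tan (arctan (y / x)) := by
        rw [tan_eq_sin_div_cos]
        field_simp [(cos_arctan_pos (y / x)).ne']
    _ = y := by
        rw [sqrt_sq_add_sq_mul_cos_arctan_div hx, tan_arctan]
        field_simp

theorem exists_integral_eq_of_mem_Ico {f : ℝ → ℝ} {ρ d : ℝ} (hρ : 0 ≤ ρ)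
    (hf : IntervalIntegrable f volume 0 ρ) (hd : d ∈ Ico 0 (∫ u in 0..ρ, f u)) :
    ∃ σ ∈ Ico 0 ρ, ∫ u in 0..σ, f u = d := by
  have hcont := continuousOn_primitive_interval' hf left_mem_uIcc
  rw [uIcc_of_le hρ] at hcont
  obtain ⟨σ, hσ, hσd⟩ := intermediate_value_Icc hρ hcont (by simpa using Ico_subset_Icc_self hd)
  exact ⟨σ, ⟨hσ.1, hσ.2.lt_of_ne (by rintro rfl; exact hd.2.ne hσd.symm)⟩, hσd⟩

theorem mul_cos_le_cos_mul_integral_cos_add_sin_mul_integral_sin {α : ℝ → ℝ} {ρ σ θ δ : ℝ}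
    (hα : MonotoneOn α (Icc 0 ρ)) (hδ : δ ≤ π)
    (hcone : ∀ u ∈ Icc 0 ρ, α u ∈ Icc (θ - δ) (θ + δ)) (hσ : σ ∈ Icc 0 ρ) :
    σ * cos δ ≤ cos θ * (∫ u in 0..σ, cos (α u)) + sin θ * ∫ u in 0..σ, sin (α u) := by
  have hασ : MonotoneOn α (uIcc 0 σ) := hα.mono (uIcc_of_le hσ.1 ▸ Icc_subset_Icc_right hσ.2)
  calc σ * cos δ = ∫ _ in 0..σ, cos δ := by simp
    _ ≤ ∫ u in 0..σ, cos (α u - θ) := by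
      refine integral_mono_on hσ.1 intervalIntegrable_const hασ.intervalIntegrable_cos_comp_sub
        fun u hu => ?_
      have h := hcone u ⟨hu.1, hu.2.trans hσ.2⟩
      rw [← cos_abs (α u - θ)]
      exact cos_le_cos_of_nonneg_of_le_pi (abs_nonneg _) hδ
        (abs_le.2 ⟨by linarith [h.1], by linarith [h.2]⟩)
    _ = _ := by
      have hcos := hασ.intervalIntegrable_cos_comp_sub (θ := 0)
      have hsin := hασ.intervalIntegrable_cos_comp_sub (θ := π / 2)
      simp only [sub_zero, cos_sub_pi_div_two] at hcos hsin
      simp only [cos_sub]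
      rw [integral_add (hcos.mul_const _) (hsin.mul_const _), intervalIntegral.integral_mul_const,
        intervalIntegral.integral_mul_const]
      ring

section TangentCone

variable {α : ℝ → ℝ} {ρ σ ψ lam : ℝ}

theorem mul_cos_le_integral_cos (hα : MonotoneOn α (Icc 0 ρ))
    (hrange : ∀ u ∈ Icc 0 ρ, α u ∈ Icc ψ lam) (hψ : -lam ≤ ψ) (hlam : lam ≤ π)
    (hσ : σ ∈ Icc 0 ρ) : σ * cos lam ≤ ∫ u in 0..σ, cos (α u) := by
  have := mul_cos_le_cos_mul_integral_cos_add_sin_mul_integral_sin (θ := 0) hα hlam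
    (fun u hu => ⟨by linarith [(hrange u hu).1], by linarith [(hrange u hu).2]⟩) hσ
  simpa using this

theorem integral_sin_le_mul_sin (hα : MonotoneOn α (Icc 0 ρ))
    (hrange : ∀ u ∈ Icc 0 ρ, α u ∈ Icc ψ lam) (hψ : -(π / 2) ≤ ψ) (hlam : lam ≤ π / 2)
    (hσ : σ ∈ Icc 0 ρ) : ∫ u in 0..σ, sin (α u) ≤ σ * sin lam := by
  have := mul_cos_le_cos_mul_integral_cos_add_sin_mul_integral_sin (θ := -(π / 2))
    (δ := lam + π / 2) hα (by linarith)
    (fun u hu => ⟨by linarith [(hrange u hu).1, (hrange u hu).2], by linarith [(hrange u hu).2]⟩)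
    hσ
  simp only [cos_add_pi_div_two, cos_neg, cos_pi_div_two, sin_neg, sin_pi_div_two] at this
  linarith

theorem tan_mul_integral_cos_le_integral_sin (hα : MonotoneOn α (Icc 0 ρ))
    (hrange : ∀ u ∈ Icc 0 ρ, α u ∈ Icc ψ lam) (hψ : ψ ∈ Ioo (-(π / 2)) (π / 2))
    (hlam : lam ≤ ψ + π) (hσ : σ ∈ Icc 0 ρ) :
    tan ψ * ∫ u in 0..σ, cos (α u) ≤ ∫ u in 0..σ, sin (α u) := by
  have := mul_cos_le_cos_mul_integral_cos_add_sin_mul_integral_sin (θ := ψ + π / 2)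
    (δ := π / 2) hα (by linarith [pi_pos])
    (fun u hu => ⟨by linarith [(hrange u hu).1], by linarith [(hrange u hu).2]⟩) hσ
  simp only [cos_pi_div_two, cos_add_pi_div_two, sin_add_pi_div_two] at this
  rw [tan_eq_sin_div_cos, div_mul_eq_mul_div, div_le_iff₀ (cos_pos_of_mem_Ioo hψ)]
  linarith

theorem mul_sin_le_integral_sin_of_integral_cos_eq (hα : MonotoneOn α (Icc 0 ρ))
    (hrange : ∀ u ∈ Icc 0 ρ, α u ∈ Icc ψ lam) (hψ : 0 ≤ ψ) (hlam : lam ∈ Ioo 0 (2 * π))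
    (hσ : σ ∈ Icc 0 ρ) (hcos : ∫ u in 0..σ, cos (α u) = σ * cos lam) :
    σ * sin lam ≤ ∫ u in 0..σ, sin (α u) := by
  have := mul_cos_le_cos_mul_integral_cos_add_sin_mul_integral_sin (θ := lam / 2)
    (δ := lam / 2) hα (by linarith [hlam.2])
    (fun u hu => ⟨by linarith [(hrange u hu).1], by linarith [(hrange u hu).2]⟩) hσ
  have hhalf : cos (lam / 2) = cos lam * cos (lam / 2) + sin lam * sin (lam / 2) := by
    rw [← cos_sub]
    ring_nf
  have hsin : 0 < sin (lam / 2) :=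
    sin_pos_of_pos_of_lt_pi (by linarith [hlam.1]) (by linarith [hlam.2])
  rw [hcos] at this
  exact le_of_mul_le_mul_left (by linear_combination this - σ * hhalf) hsin

end TangentCone

/-- The triangle lemma (Lemma on convex curves inside a right/obtuse triangle):
a convex curve of arc length `ρ` starting at `P` whose tangent angles stay in `[ψ, λ]`
reaches abscissa at least `b`, with equality only at `R`, crosses the vertical side,
and its endpoint lies in the stated region. -/
theorem convex_curve_triangle_lemma
    (a p b q r : ℝ) (hab : a < b) (hpq : p ≤ q) (hqr : q < r)
    (ρ ψ lam : ℝ)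
    (hρ : ρ = Real.sqrt ((b - a) ^ 2 + (r - p) ^ 2))
    (hψ : ψ = Real.arctan ((q - p) / (b - a)))
    (hlam : lam = Real.arctan ((r - p) / (b - a)))
    (α : ℝ → ℝ) (hmono : MonotoneOn α (Icc 0 ρ))
    (hrange : ∀ σ ∈ Icc (0:ℝ) ρ, α σ ∈ Icc ψ lam)
    (γ : ℝ → ℝ × ℝ)
    (hγ : ∀ σ : ℝ, γ σ =
      (a + ∫ u in (0:ℝ)..σ, Real.cos (α u), p + ∫ u in (0:ℝ)..σ, Real.sin (α u)))
    (n s : ℝ) (hN : γ ρ = (n, s)) :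
    b ≤ n ∧
    (n = b → (n, s) = (b, r)) ∧
    ((n, s) ≠ (b, r) → b < n ∧
      ∃ σ ∈ Icc (0:ℝ) ρ, ∃ m : ℝ, γ σ = (b, m) ∧ q ≤ m ∧ m < r) ∧
    s ∈ Icc (p + (q - p) / (b - a) * (n - a)) r := by
  have hd : 0 < b - a := sub_pos.2 hab
  have hρI : ρ ∈ Icc 0 ρ := right_mem_Icc.2 (hρ ▸ sqrt_nonneg _)
  have hψ0 : 0 ≤ ψ := hψ ▸ arctan_nonneg.2 (div_nonneg (sub_nonneg.2 hpq) hd.le)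
  have hψ2 : ψ < π / 2 := hψ ▸ arctan_lt_pi_div_two _
  have hlam0 : 0 < lam := hlam ▸ arctan_pos.2 (div_pos (by linarith) hd)
  have hlam2 : lam < π / 2 := hlam ▸ arctan_lt_pi_div_two _
  have hρc : ρ * cos lam = b - a := hρ ▸ hlam ▸ sqrt_sq_add_sq_mul_cos_arctan_div hd
  have hρs : ρ * sin lam = r - p := hρ ▸ hlam ▸ sqrt_sq_add_sq_mul_sin_arctan_div hd
  have hslope (σ) (hσ : σ ∈ Icc 0 ρ) : (q - p) / (b - a) * (∫ u in 0..σ, cos (α u)) ≤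
      ∫ u in 0..σ, sin (α u) := by
    rw [← tan_arctan ((q - p) / (b - a)), ← hψ]
    exact tan_mul_integral_cos_le_integral_sin hmono hrange ⟨by linarith, hψ2⟩ (by linarith) hσ
  have hrise (σ) (hσ : σ ∈ Icc 0 ρ) :=
    integral_sin_le_mul_sin hmono hrange (by linarith) hlam2.le hσ
  obtain ⟨hn, hs⟩ := Prod.mk.inj ((hγ ρ).symm.trans hN)
  have hbn : b ≤ n := by
    linarith [mul_cos_le_integral_cos hmono hrange (by linarith) (by linarith) hρI]
  have hsr : s ≤ r := by linarith [hrise ρ hρI]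
  have hps : p + (q - p) / (b - a) * (n - a) ≤ s := by
    rw [← hs, ← hn, add_sub_cancel_left]
    linarith [hslope ρ hρI]
  have hR : n = b → (n, s) = (b, r) := fun h => by
    have := mul_sin_le_integral_sin_of_integral_cos_eq hmono hrange hψ0
      ⟨hlam0, by linarith [pi_pos]⟩ hρI (by linarith)
    rw [h, le_antisymm hsr (by linarith)]
  refine ⟨hbn, hR, fun hne => ?_, hps, hsr⟩
  have hbn_lt : b < n := hbn.lt_of_ne fun h => hne (hR h.symm)
  obtain ⟨σ, hσ, hXσ⟩ := exists_integral_eq_of_mem_Ico hρI.1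
    (by simpa using (hmono.mono (uIcc_of_le hρI.1).subset).intervalIntegrable_cos_comp_sub (θ := 0))
    ⟨hd.le, by linarith⟩
  refine ⟨hbn_lt, σ, Ico_subset_Icc_self hσ, p + ∫ u in 0..σ, sin (α u),
    by rw [hγ, hXσ]; ring_nf, ?_, ?_⟩
  · have := hslope σ (Ico_subset_Icc_self hσ)
    rw [hXσ, div_mul_cancel₀ _ hd.ne'] at this
    linarith
  · have hsin : 0 < sin lam := sin_pos_of_pos_of_lt_pi hlam0 (by linarith [pi_pos])
    linarith [hrise σ (Ico_subset_Icc_self hσ), mul_lt_mul_of_pos_right hσ.2 hsin]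
end

section
/- Let γ : [s,t] → ℝ² be a unit-speed curve whose tangent angle function α is nondecreasing with total increase at most Ω < π/2 on [s,t]. Then the chord length satisfies |γ(t) − γ(s)| ≥ (t − s)·cos Ω; in particular chord length and arc length are comparable: (t−s)·cos Ω ≤ |γ(t) − γ(s)| ≤ t − s. -/
/-!
Project the chord onto the initial tangent `u = γ'(s)`. Since the tangent angle only increases,
by at most `Ω`, the tangent never makes an angle larger than `Ω ≤ π` with `u`, so
`⟪u, γ'(σ)⟫ ≥ cos Ω` throughout and the mean value inequality gives
`‖γ t - γ s‖ ≥ ⟪u, γ t - γ s⟫ ≥ (t - s) cos Ω`. The upper bound is the mean value inequality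
for a curve of unit speed.
-/

open Set Real

noncomputable def angleDir (θ : ℝ) : EuclideanSpace ℝ (Fin 2) := !₂[cos θ, sin θ]

lemma norm_angleDir (θ : ℝ) : ‖angleDir θ‖ = 1 := by
  simp [angleDir, EuclideanSpace.norm_eq, Fin.sum_univ_two]

lemma inner_angleDir (a b : ℝ) : inner ℝ (angleDir a) (angleDir b) = cos (b - a) := by
  simp only [angleDir, PiLp.inner_apply, Fin.sum_univ_two, RCLike.inner_apply, conj_trivial,
    Matrix.cons_val_zero, Matrix.cons_val_one, cos_sub]

section InnerLowerBound

variable {E : Type*} [NormedAddCommGroup E] [InnerProductSpace ℝ E]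

lemma mul_sub_le_inner_sub_of_le_inner_deriv {γ γ' : ℝ → E} {s t c : ℝ} (u : E) (hst : s ≤ t)
    (hγ : ∀ σ ∈ Icc s t, HasDerivAt γ (γ' σ) σ) (hc : ∀ σ ∈ Icc s t, c ≤ inner ℝ u (γ' σ)) :
    (t - s) * c ≤ inner ℝ u (γ t - γ s) := by
  have hf : ∀ σ ∈ Icc s t, HasDerivAt (fun σ => inner ℝ u (γ σ)) (inner ℝ u (γ' σ)) σ :=
    fun σ hσ => (innerSL ℝ u).hasFDerivAt.comp_hasDerivAt σ (hγ σ hσ)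
  have hIoo : ∀ σ ∈ interior (Icc s t), σ ∈ Icc s t := fun σ hσ =>
    Ioo_subset_Icc_self (interior_Icc (a := s) (b := t) ▸ hσ)
  rw [mul_comm, inner_sub_right]
  refine (convex_Icc s t).mul_sub_le_image_sub_of_le_deriv
    (fun σ hσ => (hf σ hσ).continuousAt.continuousWithinAt)
    (fun σ hσ => (hf σ (hIoo σ hσ)).differentiableAt.differentiableWithinAt)
    (fun σ hσ => (hf σ (hIoo σ hσ)).deriv ▸ hc σ (hIoo σ hσ))
    s (left_mem_Icc.2 hst) t (right_mem_Icc.2 hst) hst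

lemma mul_sub_le_norm_sub_of_le_inner_deriv {γ γ' : ℝ → E} {s t c : ℝ} {u : E} (hu : ‖u‖ ≤ 1)
    (hst : s ≤ t) (hγ : ∀ σ ∈ Icc s t, HasDerivAt γ (γ' σ) σ)
    (hc : ∀ σ ∈ Icc s t, c ≤ inner ℝ u (γ' σ)) :
    (t - s) * c ≤ ‖γ t - γ s‖ :=
  calc (t - s) * c ≤ inner ℝ u (γ t - γ s) := mul_sub_le_inner_sub_of_le_inner_deriv u hst hγ hc
    _ ≤ ‖u‖ * ‖γ t - γ s‖ := real_inner_le_norm u _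
    _ ≤ ‖γ t - γ s‖ := mul_le_of_le_one_left (norm_nonneg _) hu

end InnerLowerBound

lemma cos_le_cos_sub_of_monotoneOn {α : ℝ → ℝ} {s t σ Ω : ℝ} (hmono : MonotoneOn α (Icc s t))
    (hincr : α t - α s ≤ Ω) (hΩ : Ω ≤ π) (hσ : σ ∈ Icc s t) : cos Ω ≤ cos (α σ - α s) := by
  have hst : s ≤ t := hσ.1.trans hσ.2
  have hs : α s ≤ α σ := hmono (left_mem_Icc.2 hst) hσ hσ.1
  have ht : α σ ≤ α t := hmono hσ (right_mem_Icc.2 hst) hσ.2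
  exact cos_le_cos_of_nonneg_of_le_pi (by linarith) hΩ (by linarith)

theorem chord_arc_comparison_general
    (s t Ω : ℝ) (hst : s ≤ t) (hΩ : Ω < Real.pi / 2)
    (α : ℝ → ℝ) (hmono : MonotoneOn α (Icc s t))
    (hincr : α t - α s ≤ Ω)
    (γ : ℝ → EuclideanSpace ℝ (Fin 2))
    (hderiv : ∀ σ ∈ Icc s t,
      HasDerivAt γ (WithLp.toLp 2 ![Real.cos (α σ), Real.sin (α σ)] : EuclideanSpace ℝ (Fin 2)) σ) :
    (t - s) * Real.cos Ω ≤ ‖γ t - γ s‖ ∧ ‖γ t - γ s‖ ≤ t - s := by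
  have hγ : ∀ σ ∈ Icc s t, HasDerivAt γ (angleDir (α σ)) σ := hderiv
  constructor
  · refine mul_sub_le_norm_sub_of_le_inner_deriv (norm_angleDir (α s)).le hst hγ fun σ hσ => ?_
    rw [inner_angleDir]
    exact cos_le_cos_sub_of_monotoneOn hmono hincr (by linarith [pi_pos]) hσ
  · simpa using norm_image_sub_le_of_norm_deriv_le_segment' (C := 1)
      (fun σ hσ => (hγ σ hσ).hasDerivWithinAt) (fun σ _ => (norm_angleDir (α σ)).le)
      t (right_mem_Icc.2 hst)

/-- Chord length and arc length are comparable for a unit-speed convex curve whose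
tangent angle increases by at most `Ω < π/2`:
`(t - s)·cos Ω ≤ |γ t - γ s| ≤ t - s`. -/
theorem chord_arc_comparison
    (s t Ω : ℝ) (hst : s ≤ t) (hΩ0 : 0 ≤ Ω) (hΩ : Ω < Real.pi / 2)
    (α : ℝ → ℝ) (hmono : MonotoneOn α (Icc s t))
    (hincr : α t - α s ≤ Ω)
    (γ : ℝ → EuclideanSpace ℝ (Fin 2))
    (hderiv : ∀ σ ∈ Icc s t,
      HasDerivAt γ (WithLp.toLp 2 ![Real.cos (α σ), Real.sin (α σ)] : EuclideanSpace ℝ (Fin 2)) σ) :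
    (t - s) * Real.cos Ω ≤ ‖γ t - γ s‖ ∧ ‖γ t - γ s‖ ≤ t - s :=
  chord_arc_comparison_general s t Ω hst hΩ α hmono hincr γ hderiv
end

section
/- Let γ be the boundary of a planar convex body, parameterized by arc length, and suppose its tangent angle function α (nondecreasing, with one-sided versions α₋, α₊) satisfies: the a.e. derivative α' ≥ κ₀ > 0 almost everywhere. Then for any two points x = γ(s₀), y = γ(t) with s₀ < t on the boundary, and any outer unit normals u at x and v at y (with the angle from u to v along the arc not exceeding π), the angle arccos⟨u,v⟩ ≥ κ₀ (t − s₀) ≥ κ₀ |x − y|. In particular, the minimal oscillation of the normal vector function with respect to chord length satisfies Ω(n, τ) ≥ κ₀ τ. -/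
open Set Real intervalIntegral

/-! The tangent angle gains at least `κ₀ (t - s₀)` on `[s₀, t]`, and the normal angles `θ₁ ≤ θ₂`
bracket `α` on `(s₀, t)`, so `θ₂ - θ₁ ≥ κ₀ (t - s₀)`; as `θ₂ - θ₁ ∈ [0, π]`, it is exactly
`arccos ⟪u, v⟫`. The chord `γ t - γ s₀` is the integral of a unit vector field over `[s₀, t]`,
so its length is at most the arc length `t - s₀`. -/

noncomputable def unitTangent (θ : ℝ) : EuclideanSpace ℝ (Fin 2) := WithLp.toLp 2 ![cos θ, sin θ]

noncomputable def outerNormal (θ : ℝ) : EuclideanSpace ℝ (Fin 2) := WithLp.toLp 2 ![sin θ, -cos θ]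

@[simp]
lemma norm_unitTangent (θ : ℝ) : ‖unitTangent θ‖ = 1 := by
  simp [unitTangent, EuclideanSpace.norm_eq, Fin.sum_univ_two]

lemma inner_outerNormal (θ₁ θ₂ : ℝ) :
    inner ℝ (outerNormal θ₁) (outerNormal θ₂) = cos (θ₂ - θ₁) := by
  simp [outerNormal, PiLp.inner_apply, Fin.sum_univ_two, cos_sub]
  ring

lemma arccos_inner_outerNormal {θ₁ θ₂ : ℝ} (h₀ : θ₁ ≤ θ₂) (hπ : θ₂ - θ₁ ≤ π) :
    arccos (inner ℝ (outerNormal θ₁) (outerNormal θ₂)) = θ₂ - θ₁ := by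
  rw [inner_outerNormal, arccos_cos (sub_nonneg.2 h₀) hπ]

lemma continuous_unitTangent : Continuous unitTangent := by
  unfold unitTangent; fun_prop

lemma intervalIntegrable_unitTangent_comp {α : ℝ → ℝ} (hα : Measurable α) (a b : ℝ) :
    IntervalIntegrable (fun u => unitTangent (α u)) MeasureTheory.volume a b :=
  (intervalIntegrable_const (c := (1 : ℝ))).mono_fun
    (continuous_unitTangent.comp_aestronglyMeasurable hα.aestronglyMeasurable)
    (by simp [Filter.EventuallyLE.rfl])

lemma integral_unitTangent_comp {α : ℝ → ℝ} (hα : Measurable α) (a b : ℝ) :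
    ∫ u in a..b, unitTangent (α u) =
      WithLp.toLp 2 ![∫ u in a..b, cos (α u), ∫ u in a..b, sin (α u)] := by
  have hcoord i := (EuclideanSpace.proj (𝕜 := ℝ) i).intervalIntegral_comp_comm
    (intervalIntegrable_unitTangent_comp hα a b)
  simp only [EuclideanSpace.coe_proj] at hcoord
  ext i
  rw [← hcoord]
  fin_cases i <;> simp [unitTangent]

lemma lipschitzWith_one_of_eq_add_integral {E : Type*} [NormedAddCommGroup E] [NormedSpace ℝ E]
    {γ f : ℝ → E} (hf : ∀ a b, IntervalIntegrable f MeasureTheory.volume a b)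
    (hf₁ : ∀ u, ‖f u‖ ≤ 1) (hγ : ∀ s, γ s = γ 0 + ∫ u in 0..s, f u) : LipschitzWith 1 γ := by
  refine LipschitzWith.of_dist_le_mul fun t s => ?_
  have hchord : γ t - γ s = ∫ u in s..t, f u := by
    rw [hγ t, hγ s, add_sub_add_left_eq_sub, integral_interval_sub_left (hf 0 t) (hf 0 s)]
  simpa [dist_eq_norm, hchord] using norm_integral_le_of_norm_le_const fun u _ => hf₁ u

lemma mul_sub_le_sub_of_growth {κ : ℝ} {α : ℝ → ℝ}
    (hlow : ∀ s t, s ≤ t → κ * (t - s) ≤ α t - α s) {s₀ t θ₁ θ₂ : ℝ} (hst : s₀ < t)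
    (h₁ : ∀ s > s₀, θ₁ ≤ α s) (h₂ : ∀ s < t, α s ≤ θ₂) : κ * (t - s₀) ≤ θ₂ - θ₁ := by
  have hshrink : ∀ δ ∈ Ioo 0 ((t - s₀) / 2), κ * ((t - δ) - (s₀ + δ)) ≤ θ₂ - θ₁ := by
    rintro δ ⟨hδ₀, hδ⟩
    have := hlow (s₀ + δ) (t - δ) (by linarith)
    linarith [h₁ (s₀ + δ) (by linarith), h₂ (t - δ) (by linarith)]
  have hlim : Filter.Tendsto (fun δ => κ * ((t - δ) - (s₀ + δ))) (nhdsWithin 0 (Ioi 0))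
      (nhds (κ * (t - s₀))) :=
    ((by fun_prop : Continuous fun δ : ℝ => κ * ((t - δ) - (s₀ + δ))).tendsto' 0 _
      (by ring)).mono_left nhdsWithin_le_nhds
  exact le_of_tendsto hlim (Filter.mem_of_superset (Ioo_mem_nhdsGT (by linarith)) hshrink)

theorem normal_oscillation_lower_bound_general
    (κ₀ : ℝ) (hκ₀ : 0 < κ₀)
    (α : ℝ → ℝ) (hmono : Monotone α)
    (hlow : ∀ s t : ℝ, s ≤ t → κ₀ * (t - s) ≤ α t - α s)
    (γ : ℝ → EuclideanSpace ℝ (Fin 2))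
    (hγ : ∀ s : ℝ, γ s = γ 0 + (WithLp.equiv 2 (Fin 2 → ℝ)).symm
        ![∫ u in (0:ℝ)..s, Real.cos (α u), ∫ u in (0:ℝ)..s, Real.sin (α u)])
    (s₀ t : ℝ) (hst : s₀ < t)
    (θ₁ θ₂ : ℝ)
    (hθ₁r : ∀ s > s₀, θ₁ ≤ α s)
    (hθ₂l : ∀ s < t, α s ≤ θ₂)
    (u v : EuclideanSpace ℝ (Fin 2))
    (hu : u = (WithLp.toLp 2 ![Real.sin θ₁, -Real.cos θ₁] : EuclideanSpace ℝ (Fin 2)))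
    (hv : v = (WithLp.toLp 2 ![Real.sin θ₂, -Real.cos θ₂] : EuclideanSpace ℝ (Fin 2)))
    (hangle : θ₂ - θ₁ ≤ Real.pi) :
    κ₀ * (t - s₀) ≤ Real.arccos (inner ℝ u v : ℝ) ∧
    κ₀ * ‖γ t - γ s₀‖ ≤ κ₀ * (t - s₀) ∧
    (∀ τ : ℝ, 0 ≤ τ → τ ≤ ‖γ t - γ s₀‖ → κ₀ * τ ≤ Real.arccos (inner ℝ u v : ℝ)) := by
  have hgap : κ₀ * (t - s₀) ≤ θ₂ - θ₁ := mul_sub_le_sub_of_growth hlow hst hθ₁r hθ₂l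
  have hθ : θ₁ ≤ θ₂ :=
    (hθ₁r _ (left_lt_add_div_two.2 hst)).trans (hθ₂l _ (add_div_two_lt_right.2 hst))
  have hangle_eq : arccos (inner ℝ u v) = θ₂ - θ₁ := by
    rw [hu, hv]
    exact arccos_inner_outerNormal hθ hangle
  have hlip : LipschitzWith 1 γ :=
    lipschitzWith_one_of_eq_add_integral (intervalIntegrable_unitTangent_comp hmono.measurable)
      (fun _ => (norm_unitTangent _).le)
      (fun s => by rw [hγ s, integral_unitTangent_comp hmono.measurable]; rfl)
  have hchord : ‖γ t - γ s₀‖ ≤ t - s₀ := by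
    simpa [← dist_eq_norm, abs_of_pos (sub_pos.2 hst), Real.dist_eq] using hlip.dist_le_mul t s₀
  refine ⟨hangle_eq ▸ hgap, mul_le_mul_of_nonneg_left hchord hκ₀.le, fun τ _ hτ => ?_⟩
  rw [hangle_eq]
  exact (mul_le_mul_of_nonneg_left (hτ.trans hchord) hκ₀.le).trans hgap

/-- For an arc-length parameterized convex boundary curve whose (nondecreasing) tangent
angle function increases at rate at least `κ₀ > 0`, the angle between outer unit
normals at two boundary points is at least `κ₀` times the arc length between them,
hence at least `κ₀` times the chord length; in particular the minimal oscillation of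
the normal with respect to chord length is at least `κ₀ τ`. -/
theorem normal_oscillation_lower_bound
    (κ₀ : ℝ) (hκ₀ : 0 < κ₀)
    (α : ℝ → ℝ) (hmono : Monotone α)
    (hlow : ∀ s t : ℝ, s ≤ t → κ₀ * (t - s) ≤ α t - α s)
    (γ : ℝ → EuclideanSpace ℝ (Fin 2))
    (hγ : ∀ s : ℝ, γ s = γ 0 + (WithLp.equiv 2 (Fin 2 → ℝ)).symm
        ![∫ u in (0:ℝ)..s, Real.cos (α u), ∫ u in (0:ℝ)..s, Real.sin (α u)])
    (s₀ t : ℝ) (hst : s₀ < t)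
    (θ₁ θ₂ : ℝ)
    (hθ₁l : ∀ s < s₀, α s ≤ θ₁) (hθ₁r : ∀ s > s₀, θ₁ ≤ α s)
    (hθ₂l : ∀ s < t, α s ≤ θ₂) (hθ₂r : ∀ s > t, θ₂ ≤ α s)
    (u v : EuclideanSpace ℝ (Fin 2))
    (hu : u = (WithLp.toLp 2 ![Real.sin θ₁, -Real.cos θ₁] : EuclideanSpace ℝ (Fin 2)))
    (hv : v = (WithLp.toLp 2 ![Real.sin θ₂, -Real.cos θ₂] : EuclideanSpace ℝ (Fin 2)))
    (hangle : θ₂ - θ₁ ≤ Real.pi) :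
    κ₀ * (t - s₀) ≤ Real.arccos (inner ℝ u v : ℝ) ∧
    κ₀ * ‖γ t - γ s₀‖ ≤ κ₀ * (t - s₀) ∧
    (∀ τ : ℝ, 0 ≤ τ → τ ≤ ‖γ t - γ s₀‖ → κ₀ * τ ≤ Real.arccos (inner ℝ u v : ℝ)) :=
  normal_oscillation_lower_bound_general κ₀ hκ₀ α hmono hlow γ hγ s₀ t hst θ₁ θ₂ hθ₁r hθ₂l u v hu hv
    hangle
end

section
/- Let K be a convex body in a Hilbert space H, x ∈ ∂K, and P a closed affine subspace through x containing an interior point of K; set K₀ := K ∩ P. If u is an outer unit normal of K at x, write u = Πu + u' with Πu ∈ P − x and u' ⊥ (P − x); then Πu ≠ 0 and w := Πu/|Πu| is an outer unit normal of K₀ at x within P, i.e., ⟨w, y − x⟩ ≤ 0 for all y ∈ K₀. -/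
/-! If the component of `u` along `V` vanished, `u` would be orthogonal to `y - x` for the
interior point `y ∈ P`; but a nonzero normal is strictly negative on `y - x` for every interior
point `y`, since `y` can be pushed a little further in the direction `u` without leaving `K`.
On `K ∩ P` the orthogonal component pairs to zero with `y - x`, so the projected vector inherits
the normal inequality, and rescaling by `‖w'‖⁻¹ ≥ 0` keeps it. -/

open Filter Topology

open scoped RealInnerProductSpace

theorem inner_sub_neg_of_mem_interior {H : Type*} [NormedAddCommGroup H]
    [InnerProductSpace ℝ H] {s : Set H} {x y u : H} (hu : u ≠ 0)
    (hs : ∀ z ∈ s, ⟪u, z - x⟫ ≤ 0) (hy : y ∈ interior s) : ⟪u, y - x⟫ < 0 := by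
  have hline : Tendsto (fun t : ℝ ↦ y + t • u) (𝓝[>] 0) (𝓝 y) := by
    have : Continuous (fun t : ℝ ↦ y + t • u) := by fun_prop
    simpa using this.continuousAt.tendsto.mono_left (nhdsWithin_le_nhds (a := (0 : ℝ)))
  obtain ⟨t, hts, ht⟩ :=
    ((hline.eventually (mem_interior_iff_mem_nhds.mp hy)).and self_mem_nhdsWithin).exists
  have hmove : ⟪u, y + t • u - x⟫ = ⟪u, y - x⟫ + t * ‖u‖ ^ 2 := by
    rw [add_sub_right_comm, inner_add_right, real_inner_smul_right, real_inner_self_eq_norm_sq]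
  have hgain : 0 < t * ‖u‖ ^ 2 := mul_pos ht (by positivity)
  linarith [hs _ hts, hmove]

theorem projected_normal_is_normal_of_section_general
    {H : Type*} [NormedAddCommGroup H] [InnerProductSpace ℝ H]
    (K : Set H)
    (x : H)
    (V : Submodule ℝ H)
    (hP : ∃ y ∈ interior K, y - x ∈ V)
    (u : H) (hu : ‖u‖ = 1)
    (hnormal : ∀ y ∈ K, (inner ℝ u (y - x) : ℝ) ≤ 0)
    (w' u' : H) (hu' : u' ∈ Vᗮ) (hdecomp : u = w' + u') :
    w' ≠ 0 ∧ ∀ y ∈ K ∩ {z : H | z - x ∈ V}, (inner ℝ (‖w'‖⁻¹ • w') (y - x) : ℝ) ≤ 0 := by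
  obtain ⟨y, hyK, hyV⟩ := hP
  have hu0 : u ≠ 0 := norm_ne_zero_iff.mp (hu ▸ one_ne_zero)
  refine ⟨?_, ?_⟩
  · rintro rfl
    rw [zero_add] at hdecomp
    subst hdecomp
    exact (inner_sub_neg_of_mem_interior hu0 hnormal hyK).ne
      (Submodule.inner_left_of_mem_orthogonal hyV hu')
  · rintro z ⟨hzK, hzV⟩
    have hw'z := hnormal z hzK
    rw [hdecomp, inner_add_left, Submodule.inner_left_of_mem_orthogonal hzV hu', add_zero]
      at hw'z
    rw [real_inner_smul_left]
    exact mul_nonpos_of_nonneg_of_nonpos (by positivity) hw'z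

/-- If `u` is an outer unit normal of a convex body `K` at `x ∈ ∂K`, and `P = x + V`
is a closed affine subspace through `x` containing an interior point of `K`, then in
the orthogonal decomposition `u = w' + u'` with `w' ∈ V`, `u' ⊥ V`, the component
`w'` is nonzero and `w'/‖w'‖` is an outer unit normal of `K₀ = K ∩ P` at `x` within `P`. -/
theorem projected_normal_is_normal_of_section
    {H : Type*} [NormedAddCommGroup H] [InnerProductSpace ℝ H] [CompleteSpace H]
    (K : Set H) (hKconv : Convex ℝ K) (hKcl : IsClosed K)
    (hKbd : Bornology.IsBounded K) (hKint : (interior K).Nonempty)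
    (x : H) (hx : x ∈ frontier K)
    (V : Submodule ℝ H) (hVcl : IsClosed (V : Set H))
    (hP : ∃ y ∈ interior K, y - x ∈ V)
    (u : H) (hu : ‖u‖ = 1)
    (hnormal : ∀ y ∈ K, (inner ℝ u (y - x) : ℝ) ≤ 0)
    (w' u' : H) (hw' : w' ∈ V) (hu' : u' ∈ Vᗮ) (hdecomp : u = w' + u') :
    w' ≠ 0 ∧ ∀ y ∈ K ∩ {z : H | z - x ∈ V}, (inner ℝ (‖w'‖⁻¹ • w') (y - x) : ℝ) ≤ 0 :=
  projected_normal_is_normal_of_section_general K x V hP u hu hnormal w' u' hu' hdecomp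
end

section
/- Let K be a convex body in a Hilbert space H, x ∈ ∂K, and P a closed affine subspace through x containing an interior point of K; set K₀ := K ∩ P. Then for every outer unit normal w of K₀ at x within P, there exists an outer unit normal u of K at x such that Πu is a nonzero positive multiple of w, where Π is the orthogonal projection onto P − x. -/
/-!
Put `W = V ∩ w^⊥`. The open convex set `interior K + W` misses `x`: otherwise a point of
`interior K` nudged along `w` would be a point of `K ∩ P` strictly on the positive side of `w`.
A functional `f` separating `x` from that set is bounded above on the coset `y + W`, hence
vanishes on `W`, so on `V` it is a multiple of `⟪w, ·⟫`; the interior point `y` of `K` in `P`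
forces that multiple to be positive. The normalized Riesz representative of `f` is `u`.
-/

open Set Topology Pointwise
open scoped RealInnerProductSpace

theorem LinearMap.apply_eq_zero_of_forall_le {𝕜 E : Type*} [Field 𝕜] [LinearOrder 𝕜]
    [IsStrictOrderedRing 𝕜] [AddCommGroup E] [Module 𝕜 E] (f : E →ₗ[𝕜] 𝕜)
    {W : Submodule 𝕜 E} {C : 𝕜} (hC : ∀ v ∈ W, f v ≤ C) {v : E} (hv : v ∈ W) : f v = 0 := by
  by_contra hfv
  have := hC (((|C| + 1) / f v) • v) (W.smul_mem _ hv)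
  rw [map_smul, smul_eq_mul, div_mul_cancel₀ _ hfv] at this
  linarith [le_abs_self C]

theorem Convex.forall_le_of_forall_interior_le {E : Type*} [AddCommGroup E] [Module ℝ E]
    [TopologicalSpace E] [IsTopologicalAddGroup E] [ContinuousSMul ℝ E] {K : Set E}
    (hK : Convex ℝ K) (hKint : (interior K).Nonempty) {f : E → ℝ} (hf : Continuous f) {c : ℝ}
    (hfc : ∀ a ∈ interior K, f a ≤ c) : ∀ a ∈ K, f a ≤ c := fun _ ha =>
  closure_minimal hfc (isClosed_le hf continuous_const)
    (hK.closure_interior_eq_closure_of_nonempty_interior hKint ▸ subset_closure ha)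

section InnerProductSpace

variable {H : Type*} [NormedAddCommGroup H] [InnerProductSpace ℝ H]

theorem LinearMap.apply_eq_inner_mul_of_forall_inf_orthogonal_eq_zero (f : H →ₗ[ℝ] ℝ)
    {V : Submodule ℝ H} {w : H} (hwV : w ∈ V) (hw : ‖w‖ = 1)
    (hf : ∀ v ∈ V ⊓ (ℝ ∙ w)ᗮ, f v = 0) {v : H} (hv : v ∈ V) : f v = ⟪w, v⟫ * f w := by
  have hww : ⟪w, w⟫ = 1 := by rw [real_inner_self_eq_norm_sq, hw, one_pow]
  have hperp : v - ⟪w, v⟫ • w ∈ V ⊓ (ℝ ∙ w)ᗮ := by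
    refine ⟨V.sub_mem hv (V.smul_mem _ hwV), ?_⟩
    rw [SetLike.mem_coe, Submodule.mem_orthogonal_singleton_iff_inner_right, inner_sub_right,
      real_inner_smul_right, hww, mul_one, sub_self]
  have := hf _ hperp
  rwa [map_sub, map_smul, smul_eq_mul, sub_eq_zero] at this

theorem notMem_interior_add_inf_orthogonal {K : Set H} {x w : H} {V : Submodule ℝ H}
    (hwV : w ∈ V) (hw : w ≠ 0) (hwnormal : ∀ y ∈ K ∩ {z : H | z - x ∈ V}, ⟪w, y - x⟫ ≤ 0) :
    x ∉ interior K + ((V ⊓ (ℝ ∙ w)ᗮ : Submodule ℝ H) : Set H) := by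
  rintro ⟨a, ha, v, ⟨hvV, hvw⟩, rfl⟩
  rw [SetLike.mem_coe, Submodule.mem_orthogonal_singleton_iff_inner_right] at hvw
  have hnear : ∀ᶠ t : ℝ in 𝓝 0, a + t • w ∈ K :=
    (Continuous.tendsto' (by fun_prop) 0 a (by simp)).eventually (mem_interior_iff_mem_nhds.mp ha)
  obtain ⟨t, ht, htK⟩ := hnear.exists_gt
  have hsub : a + t • w - (a + v) = t • w - v := by abel
  have := hwnormal _ ⟨htK, by simpa [hsub] using V.sub_mem (V.smul_mem t hwV) hvV⟩
  rw [hsub, inner_sub_right, real_inner_smul_right, hvw, sub_zero] at this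
  exact this.not_gt (mul_pos ht (real_inner_self_pos.mpr hw))

theorem StrongDual.exists_norm_eq_one_forall_apply_eq_mul_inner [CompleteSpace H]
    (f : StrongDual ℝ H) (hf : f ≠ 0) : ∃ u : H, ‖u‖ = 1 ∧ ∀ z, f z = ‖f‖ * ⟪u, z⟫ := by
  set u₀ := (InnerProductSpace.toDual ℝ H).symm f
  have hu₀ : ‖u₀‖ = ‖f‖ := (InnerProductSpace.toDual ℝ H).symm.norm_map f
  have hf0 : ‖f‖ ≠ 0 := norm_ne_zero_iff.mpr hf
  refine ⟨‖f‖⁻¹ • u₀, by rw [norm_smul, norm_inv, norm_norm, hu₀, inv_mul_cancel₀ hf0], ?_⟩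
  intro z
  rw [real_inner_smul_left, ← mul_assoc, mul_inv_cancel₀ hf0, one_mul,
    InnerProductSpace.toDual_symm_apply]

end InnerProductSpace

theorem section_normal_lifts_to_space_normal_general
    {H : Type*} [NormedAddCommGroup H] [InnerProductSpace ℝ H] [CompleteSpace H]
    (K : Set H) (hKconv : Convex ℝ K)
    (x : H)
    (V : Submodule ℝ H)
    (hP : ∃ y ∈ interior K, y - x ∈ V)
    (w : H) (hwV : w ∈ V) (hw : ‖w‖ = 1)
    (hwnormal : ∀ y ∈ K ∩ {z : H | z - x ∈ V}, (inner ℝ w (y - x) : ℝ) ≤ 0) :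
    ∃ u : H, ‖u‖ = 1 ∧ (∀ y ∈ K, (inner ℝ u (y - x) : ℝ) ≤ 0) ∧
      ∃ c : ℝ, 0 < c ∧ u - c • w ∈ Vᗮ := by
  obtain ⟨y, hyK, hyV⟩ := hP
  set W : Submodule ℝ H := V ⊓ (ℝ ∙ w)ᗮ
  obtain ⟨f, hf⟩ := geometric_hahn_banach_open_point
    (hKconv.interior.add W.convex) isOpen_interior.add_right
    (notMem_interior_add_inf_orthogonal hwV (norm_ne_zero_iff.mp (hw.trans_ne one_ne_zero))
      hwnormal)
  have hfint : ∀ a ∈ interior K, ∀ v ∈ W, f (a + v) < f x := fun a ha v hv =>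
    hf _ (add_mem_add ha hv)
  have hfK : ∀ z ∈ K, f z ≤ f x := hKconv.forall_le_of_forall_interior_le ⟨y, hyK⟩
    f.continuous fun a ha => by simpa using (hfint a ha 0 W.zero_mem).le
  have hfW : ∀ v ∈ W, f v = 0 := fun v hv =>
    (f : H →ₗ[ℝ] ℝ).apply_eq_zero_of_forall_le (C := f x - f y)
      (fun v hv => show f v ≤ _ by linarith [map_add f y v, hfint y hyK v hv]) hv
  have hfV : ∀ v ∈ V, f v = ⟪w, v⟫ * f w := fun v hv =>
    (f : H →ₗ[ℝ] ℝ).apply_eq_inner_mul_of_forall_inf_orthogonal_eq_zero hwV hw hfW hv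
  have hfw : 0 < f w := by
    have hneg : ⟪w, y - x⟫ * f w < 0 := by
      rw [← hfV _ hyV, map_sub]
      simpa using hfint y hyK 0 W.zero_mem
    exact pos_of_mul_neg_right hneg (hwnormal y ⟨interior_subset hyK, hyV⟩)
  have hf0 : f ≠ 0 := by rintro rfl; simp at hfw
  obtain ⟨u, hu, hfu⟩ := f.exists_norm_eq_one_forall_apply_eq_mul_inner hf0
  have hnf : 0 < ‖f‖ := norm_pos_iff.mpr hf0
  refine ⟨u, hu, fun z hz => ?_, f w / ‖f‖, div_pos hfw hnf, ?_⟩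
  · have : ‖f‖ * ⟪u, z - x⟫ ≤ 0 := by rw [← hfu, map_sub]; linarith [hfK z hz]
    exact nonpos_of_mul_nonpos_right this hnf
  · refine (Submodule.mem_orthogonal _ _).mpr fun v hv => ?_
    rw [real_inner_comm, inner_sub_left, real_inner_smul_left]
    field_simp
    linarith [hfu v, hfV v hv]

/-- Every outer unit normal `w` of the section `K₀ = K ∩ P` at `x` within the closed
affine subspace `P = x + V` (which contains an interior point of `K`) lifts to an
outer unit normal `u` of `K` at `x` whose orthogonal projection to `V` is a nonzero
positive multiple of `w` (i.e. `u - c • w ⊥ V` for some `c > 0`). -/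
theorem section_normal_lifts_to_space_normal
    {H : Type*} [NormedAddCommGroup H] [InnerProductSpace ℝ H] [CompleteSpace H]
    (K : Set H) (hKconv : Convex ℝ K) (hKcl : IsClosed K)
    (hKbd : Bornology.IsBounded K) (hKint : (interior K).Nonempty)
    (x : H) (hx : x ∈ frontier K)
    (V : Submodule ℝ H) (hVcl : IsClosed (V : Set H))
    (hP : ∃ y ∈ interior K, y - x ∈ V)
    (w : H) (hwV : w ∈ V) (hw : ‖w‖ = 1)
    (hwnormal : ∀ y ∈ K ∩ {z : H | z - x ∈ V}, (inner ℝ w (y - x) : ℝ) ≤ 0) :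
    ∃ u : H, ‖u‖ = 1 ∧ (∀ y ∈ K, (inner ℝ u (y - x) : ℝ) ≤ 0) ∧
      ∃ c : ℝ, 0 < c ∧ u - c • w ∈ Vᗮ :=
  section_normal_lifts_to_space_normal_general K hKconv x V hP w hwV hw hwnormal
end

section
/- Let K be a convex body in a Hilbert space H with c ∈ int K such that B(c,r) ⊆ K ⊆ B(c,R), 0 < r < R. Let x ∈ ∂K, let P be a closed affine subspace containing x and c, let Π be the orthogonal projection onto P − x, and let u be an outer unit normal to K at x. Then |Πu| ≥ r/R. -/
/-!
The point `c + r • u` lies in `B(c, r) ⊆ K`, so the supporting half-space at `x` gives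
`r ≤ ⟪u, x - c⟫`. Since `x - c ∈ V` and `u - w' ⊥ V`, this inner product equals
`⟪w', x - c⟫ ≤ ‖w'‖ ‖x - c‖ ≤ ‖w'‖ R`.
-/

open RealInnerProductSpace

section

variable {H : Type*} [NormedAddCommGroup H] [InnerProductSpace ℝ H]

theorem le_inner_sub_of_closedBall_subset {K : Set H} {c x u : H} {r : ℝ} (hr : 0 ≤ r)
    (hball : Metric.closedBall c r ⊆ K) (hu : ‖u‖ = 1) (hnormal : ∀ y ∈ K, ⟪u, y - x⟫ ≤ 0) :
    r ≤ ⟪u, x - c⟫ := by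
  have hmem : c + r • u ∈ K := hball <| by
    simp [Metric.mem_closedBall, dist_eq_norm, norm_smul, hu, abs_of_nonneg hr]
  have hsupp := hnormal _ hmem
  rw [show c + r • u - x = r • u - (x - c) by abel, inner_sub_right, real_inner_smul_right,
    real_inner_self_eq_norm_sq, hu] at hsupp
  linarith

end

theorem projected_normal_norm_lower_bound_general
    {H : Type*} [NormedAddCommGroup H] [InnerProductSpace ℝ H]
    (K : Set H)
    (c : H) (r R : ℝ) (hr : 0 < r)
    (hball : Metric.closedBall c r ⊆ K) (hBall : K ⊆ Metric.closedBall c R)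
    (x : H) (hx : x ∈ frontier K)
    (V : Submodule ℝ H)
    (hcP : c - x ∈ V)
    (u : H) (hu : ‖u‖ = 1)
    (hnormal : ∀ y ∈ K, (inner ℝ u (y - x) : ℝ) ≤ 0)
    (w' u' : H) (hu' : u' ∈ Vᗮ) (hdecomp : u = w' + u') :
    r / R ≤ ‖w'‖ := by
  have hsupp : r ≤ ⟪u, x - c⟫ := le_inner_sub_of_closedBall_subset hr.le hball hu hnormal
  have hproj : ⟪u, x - c⟫ = ⟪w', x - c⟫ := by
    have hxc : x - c ∈ V := by simpa using V.neg_mem hcP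
    rw [hdecomp, inner_add_left, Submodule.inner_left_of_mem_orthogonal hxc hu', add_zero]
  have hxR : ‖x - c‖ ≤ R := by
    rw [← dist_eq_norm, ← Metric.mem_closedBall]
    exact closure_minimal hBall Metric.isClosed_closedBall (frontier_subset_closure hx)
  refine div_le_of_le_mul₀ ((norm_nonneg _).trans hxR) (norm_nonneg _) ?_
  calc r ≤ ⟪w', x - c⟫ := hproj ▸ hsupp
    _ ≤ ‖w'‖ * ‖x - c‖ := real_inner_le_norm _ _
    _ ≤ ‖w'‖ * R := by gcongr

/-- Quantitative nonvanishing of the projected normal: if `B(c,r) ⊆ K ⊆ B(c,R)` with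
`0 < r < R`, `x ∈ ∂K`, the affine subspace `P = x + V` is closed and contains `c`,
and `u` is an outer unit normal to `K` at `x` with orthogonal decomposition
`u = w' + u'`, `w' ∈ V`, `u' ⊥ V`, then `‖w'‖ ≥ r/R`. -/
theorem projected_normal_norm_lower_bound
    {H : Type*} [NormedAddCommGroup H] [InnerProductSpace ℝ H] [CompleteSpace H]
    (K : Set H) (hKconv : Convex ℝ K) (hKcl : IsClosed K)
    (c : H) (r R : ℝ) (hr : 0 < r) (hrR : r < R)
    (hball : Metric.closedBall c r ⊆ K) (hBall : K ⊆ Metric.closedBall c R)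
    (x : H) (hx : x ∈ frontier K)
    (V : Submodule ℝ H) (hVcl : IsClosed (V : Set H))
    (hcP : c - x ∈ V)
    (u : H) (hu : ‖u‖ = 1)
    (hnormal : ∀ y ∈ K, (inner ℝ u (y - x) : ℝ) ≤ 0)
    (w' u' : H) (hw' : w' ∈ V) (hu' : u' ∈ Vᗮ) (hdecomp : u = w' + u') :
    r / R ≤ ‖w'‖ :=
  projected_normal_norm_lower_bound_general K c r R hr hball hBall x hx V hcP u hu hnormal w' u' hu'
    hdecomp
end
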